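/- arXiv:2401.00680 — 5 statements merged into one kernel-verified Lean document; each statement's English description precedes it below -/
import Mathlib

section
/- For real sequences (a_n) satisfying a_{n+3} = ((n+1)(n+2)C₀ a_{n+2} + a_n + Σ_{i=0}^{n} a_i a_{n-i}) / ((n+1)(n+2)(n+3)) with |C₀| < 1 and |a₀|, |a₁|, |a₂| < 1, one has the inductive bound: if |a_{k+2}| < 2/k² for all 1 ≤ k ≤ n (with n ≥ 3), then |a_{n+3}| ≤ (n+6)/((n+1)(n+2)(n+3)) < 2/(n+1)². -/
/-!
The numerator of the recursion has three parts. Since `|C₀| < 1` and `|a (n+2)| < 2/n²`, the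
first is at most `2(n+1)(n+2)/n² ≤ 40/9` for `n ≥ 3`. Every coefficient up to `a (n+2)` has
modulus at most `1`, and from `a 3` on at most `2/3` (for `a 3` by the recursion at `0`, beyond it
by the inductive hypothesis `2/k² ≤ 1/2`). Hence `|a n| ≤ 2/3`, and the convolution sum, whose two
end terms `a 0 * a n` are at most `2/3`, is at most `n + 1/3`. Altogether the numerator is at most
`n + 49/9 ≤ n + 6`.
-/

open Finset

def CoeffRecurrence (C₀ : ℝ) (a : ℕ → ℝ) : Prop :=
  ∀ n : ℕ, a (n + 3) =
    (((n : ℝ) + 1) * ((n : ℝ) + 2) * C₀ * a (n + 2) + a n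
      + ∑ i ∈ Finset.range (n + 1), a i * a (n - i))
    / (((n : ℝ) + 1) * ((n : ℝ) + 2) * ((n : ℝ) + 3))

lemma abs_mul_le_of_abs_le {x y c d : ℝ} (hx : |x| ≤ c) (hy : |y| ≤ d) : |x * y| ≤ c * d := by
  rw [abs_mul]
  exact mul_le_mul hx hy (abs_nonneg y) ((abs_nonneg x).trans hx)

lemma two_div_sq_le_half {k : ℕ} (hk : 2 ≤ k) : 2 / (k : ℝ) ^ 2 ≤ 1 / 2 := by
  have hk' : (2 : ℝ) ≤ k := by exact_mod_cast hk
  rw [div_le_div_iff₀ (by positivity) (by norm_num)]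
  nlinarith

lemma two_mul_add_one_mul_add_two_div_sq_le {n : ℕ} (hn : 3 ≤ n) :
    2 * ((n : ℝ) + 1) * ((n : ℝ) + 2) / (n : ℝ) ^ 2 ≤ 40 / 9 := by
  have hn' : (3 : ℝ) ≤ n := by exact_mod_cast hn
  rw [div_le_div_iff₀ (by positivity) (by norm_num)]
  nlinarith

lemma add_six_div_lt_two_div_sq {x : ℝ} (hx : -1 < x) :
    (x + 6) / ((x + 1) * (x + 2) * (x + 3)) < 2 / (x + 1) ^ 2 := by
  have h1 : 0 < x + 1 := by linarith
  have h2 : 0 < x + 2 := by linarith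
  have h3 : 0 < x + 3 := by linarith
  rw [div_lt_div_iff₀ (by positivity) (by positivity)]
  nlinarith [sq_nonneg (x + 3 / 2)]

lemma abs_sum_range_mul_sub_le {a : ℕ → ℝ} {n : ℕ} {c : ℝ} (hn : 1 ≤ n)
    (hbound : ∀ i ≤ n, |a i| ≤ 1) (hend : |a n| ≤ c) :
    |∑ i ∈ range (n + 1), a i * a (n - i)| ≤ (n - 1 : ℝ) + 2 * c := by
  obtain ⟨m, rfl⟩ : ∃ m, n = m + 1 := ⟨n - 1, by omega⟩
  have hfirst : |a 0 * a (m + 1)| ≤ c := by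
    simpa using abs_mul_le_of_abs_le (hbound 0 (by omega)) hend
  have hlast : |a (m + 1) * a 0| ≤ c := by rwa [mul_comm]
  have hmiddle : |∑ i ∈ range m, a (i + 1) * a (m - i)| ≤ m := by
    calc |∑ i ∈ range m, a (i + 1) * a (m - i)|
        ≤ ∑ i ∈ range m, |a (i + 1) * a (m - i)| := abs_sum_le_sum_abs _ _
      _ ≤ ∑ _i ∈ range m, (1 : ℝ) := by
          refine sum_le_sum fun i hi => ?_
          have hi' := mem_range.mp hi
          simpa using abs_mul_le_of_abs_le (hbound (i + 1) (by omega)) (hbound (m - i) (by omega))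
      _ = m := by simp
  rw [sum_range_succ, sum_range_succ']
  simp only [Nat.sub_zero, Nat.sub_self]
  push_cast
  calc _ ≤ |∑ i ∈ range m, a (i + 1) * a (m - i)| + |a 0 * a (m + 1)|
        + |a (m + 1) * a 0| := abs_add_three _ _ _
    _ ≤ (m + 1 - 1 : ℝ) + 2 * c := by linarith

lemma abs_add_one_mul_add_two_mul_le {C₀ x : ℝ} {n : ℕ} (hC : |C₀| ≤ 1) (hn : 3 ≤ n)
    (hx : |x| < 2 / (n : ℝ) ^ 2) :
    |((n : ℝ) + 1) * ((n : ℝ) + 2) * C₀ * x| ≤ 40 / 9 :=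
  calc |((n : ℝ) + 1) * ((n : ℝ) + 2) * C₀ * x|
      = ((n : ℝ) + 1) * ((n : ℝ) + 2) * |C₀| * |x| := by
        simp only [abs_mul, abs_of_nonneg (by positivity : (0 : ℝ) ≤ (n : ℝ) + 1),
          abs_of_nonneg (by positivity : (0 : ℝ) ≤ (n : ℝ) + 2)]
    _ ≤ ((n : ℝ) + 1) * ((n : ℝ) + 2) * 1 * (2 / (n : ℝ) ^ 2) := by gcongr
    _ = 2 * ((n : ℝ) + 1) * ((n : ℝ) + 2) / (n : ℝ) ^ 2 := by ring
    _ ≤ 40 / 9 := two_mul_add_one_mul_add_two_div_sq_le hn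

section Coefficients

variable {C₀ : ℝ} {a : ℕ → ℝ} {n : ℕ}

lemma abs_coeff_three_le (hC : |C₀| ≤ 1) (ha0 : |a 0| ≤ 1) (ha2 : |a 2| ≤ 1)
    (hrec : CoeffRecurrence C₀ a) : |a 3| ≤ 2 / 3 := by
  have h2 : |2 * C₀ * a 2| ≤ 2 * 1 * 1 :=
    abs_mul_le_of_abs_le (abs_mul_le_of_abs_le (by norm_num) hC) ha2
  have h00 : |a 0 * a 0| ≤ 1 * 1 := abs_mul_le_of_abs_le ha0 ha0
  calc |a 3| = |2 * C₀ * a 2 + a 0 + a 0 * a 0| / 6 := by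
        rw [hrec 0]; norm_num [abs_div]
    _ ≤ (|2 * C₀ * a 2| + |a 0| + |a 0 * a 0|) / 6 := by gcongr; exact abs_add_three _ _ _
    _ ≤ 2 / 3 := by linarith

lemma abs_coeff_le_two_thirds (hC : |C₀| ≤ 1) (ha0 : |a 0| ≤ 1) (ha2 : |a 2| ≤ 1)
    (hrec : CoeffRecurrence C₀ a)
    (hind : ∀ k : ℕ, 1 ≤ k → k ≤ n → |a (k + 2)| < 2 / (k : ℝ) ^ 2)
    {m : ℕ} (h3 : 3 ≤ m) (hm : m ≤ n + 2) : |a m| ≤ 2 / 3 := by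
  rcases h3.eq_or_lt with rfl | h4
  · exact abs_coeff_three_le hC ha0 ha2 hrec
  · obtain ⟨k, rfl⟩ : ∃ k, m = k + 2 := ⟨m - 2, by omega⟩
    linarith [hind k (by omega) (by omega), two_div_sq_le_half (k := k) (by omega)]

lemma abs_coeff_le_one (hC : |C₀| ≤ 1) (ha0 : |a 0| ≤ 1) (ha1 : |a 1| ≤ 1) (ha2 : |a 2| ≤ 1)
    (hrec : CoeffRecurrence C₀ a)
    (hind : ∀ k : ℕ, 1 ≤ k → k ≤ n → |a (k + 2)| < 2 / (k : ℝ) ^ 2)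
    {m : ℕ} (hm : m ≤ n + 2) : |a m| ≤ 1 := by
  rcases lt_or_ge m 3 with h3 | h3
  · interval_cases m <;> assumption
  · linarith [abs_coeff_le_two_thirds hC ha0 ha2 hrec hind h3 hm]

end Coefficients

/-- inductive bound for the coefficients of the power series solution of
`Ψ''' = C₀Ψ'' + Ψ² + Ψ`. -/
theorem stmt1 (C₀ : ℝ) (hC : |C₀| < 1) (a : ℕ → ℝ)
    (ha0 : |a 0| < 1) (ha1 : |a 1| < 1) (ha2 : |a 2| < 1)
    (hrec : ∀ n : ℕ, a (n + 3) =
      (((n : ℝ) + 1) * ((n : ℝ) + 2) * C₀ * a (n + 2) + a n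
        + ∑ i ∈ Finset.range (n + 1), a i * a (n - i))
      / (((n : ℝ) + 1) * ((n : ℝ) + 2) * ((n : ℝ) + 3)))
    (n : ℕ) (hn : 3 ≤ n)
    (hind : ∀ k : ℕ, 1 ≤ k → k ≤ n → |a (k + 2)| < 2 / (k : ℝ) ^ 2) :
    |a (n + 3)| ≤ ((n : ℝ) + 6) / (((n : ℝ) + 1) * ((n : ℝ) + 2) * ((n : ℝ) + 3)) ∧
    ((n : ℝ) + 6) / (((n : ℝ) + 1) * ((n : ℝ) + 2) * ((n : ℝ) + 3)) < 2 / ((n : ℝ) + 1) ^ 2 := by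
  have hlead := abs_add_one_mul_add_two_mul_le hC.le hn (hind n (by omega) le_rfl)
  have hmid : |a n| ≤ 2 / 3 := abs_coeff_le_two_thirds hC.le ha0.le ha2.le hrec hind hn (by omega)
  have hconv := abs_sum_range_mul_sub_le (a := a) (n := n) (by omega)
    (fun i hi => abs_coeff_le_one hC.le ha0.le ha1.le ha2.le hrec hind (by omega)) hmid
  refine ⟨?_, add_six_div_lt_two_div_sq (neg_one_lt_zero.trans_le n.cast_nonneg)⟩
  have hnum : |((n : ℝ) + 1) * ((n : ℝ) + 2) * C₀ * a (n + 2) + a n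
      + ∑ i ∈ Finset.range (n + 1), a i * a (n - i)| ≤ (n : ℝ) + 6 :=
    calc _ ≤ |((n : ℝ) + 1) * ((n : ℝ) + 2) * C₀ * a (n + 2)| + |a n|
          + |∑ i ∈ Finset.range (n + 1), a i * a (n - i)| := abs_add_three _ _ _
      _ ≤ (n : ℝ) + 6 := by linarith
  have hden : (0 : ℝ) < ((n : ℝ) + 1) * ((n : ℝ) + 2) * ((n : ℝ) + 3) := by positivity
  rw [hrec n, abs_div, abs_of_pos hden]
  exact div_le_div_of_nonneg_right hnum hden.le
end

section
/- If a smooth function q̄ : ℝ → ℝ satisfies the system dq̄/dt = 2p̄, dq/dt = 2p, dp/dt = -(1+q̄)e^q, dp̄/dt = -e^q (for smooth functions q, p, p̄), then q̄ satisfies the single fourth-order equation (d⁴q̄/dt⁴)(d²q̄/dt²) = (d³q̄/dt³)² + (1+q̄)(d²q̄/dt²)³. -/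
/-- a solution of the Hamiltonian system `q̄' = 2p̄`, `q' = 2p`,
`p' = -(1+q̄)e^q`, `p̄' = -e^q` satisfies the fourth order equation
`q̄⁗ q̄'' = (q̄''')² + (1+q̄)(q̄'')³`. -/
theorem stmt2 (p pbar q qbar : ℝ → ℝ)
    (hp : ContDiff ℝ (⊤ : ℕ∞) p) (hpbar : ContDiff ℝ (⊤ : ℕ∞) pbar)
    (hq : ContDiff ℝ (⊤ : ℕ∞) q) (hqbar : ContDiff ℝ (⊤ : ℕ∞) qbar)
    (h1 : ∀ t, deriv qbar t = 2 * pbar t)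
    (h2 : ∀ t, deriv q t = 2 * p t)
    (h3 : ∀ t, deriv p t = -(1 + qbar t) * Real.exp (q t))
    (h4 : ∀ t, deriv pbar t = -Real.exp (q t)) :
    ∀ t, iteratedDeriv 4 qbar t * iteratedDeriv 2 qbar t =
      (iteratedDeriv 3 qbar t) ^ 2 + (1 + qbar t) * (iteratedDeriv 2 qbar t) ^ 3 := by
  have hq' : ∀ t, HasDerivAt q (2 * p t) t := fun t => by
    have := (hq.differentiable (by simp) t).hasDerivAt
    rwa [h2 t] at this
  have hp' : ∀ t, HasDerivAt p (-(1 + qbar t) * Real.exp (q t)) t := fun t => by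
    have := (hp.differentiable (by simp) t).hasDerivAt
    rwa [h3 t] at this
  have hexp : ∀ t, HasDerivAt (fun s => Real.exp (q s)) (Real.exp (q t) * (2 * p t)) t :=
    fun t => (hq' t).exp
  have e1 : deriv qbar = fun t => 2 * pbar t := funext h1
  have e2 : deriv (deriv qbar) = fun t => -2 * Real.exp (q t) := by
    rw [e1]; funext t
    rw [deriv_const_mul _ (hpbar.differentiable (by simp) t), h4 t]; ring
  have h3' : ∀ t, HasDerivAt (fun s => -2 * Real.exp (q s))
      (-2 * (Real.exp (q t) * (2 * p t))) t := fun t => (hexp t).const_mul (-2)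
  have e3 : deriv (deriv (deriv qbar)) = fun t => -2 * (Real.exp (q t) * (2 * p t)) := by
    rw [e2]; funext t; exact (h3' t).deriv
  have e4 : ∀ t, deriv (deriv (deriv (deriv qbar))) t =
      -2 * (Real.exp (q t) * (2 * p t) * (2 * p t)
        + Real.exp (q t) * (2 * (-(1 + qbar t) * Real.exp (q t)))) := by
    intro t
    rw [e3]
    exact (((hexp t).mul ((hp' t).const_mul 2)).const_mul (-2)).deriv
  intro t
  have i2 : iteratedDeriv 2 qbar t = -2 * Real.exp (q t) := by
    rw [iteratedDeriv_succ, iteratedDeriv_one, e2]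
  have i3 : iteratedDeriv 3 qbar t = -2 * (Real.exp (q t) * (2 * p t)) := by
    rw [iteratedDeriv_succ, iteratedDeriv_succ, iteratedDeriv_one, e3]
  have i4 : iteratedDeriv 4 qbar t =
      -2 * (Real.exp (q t) * (2 * p t) * (2 * p t)
        + Real.exp (q t) * (2 * (-(1 + qbar t) * Real.exp (q t)))) := by
    rw [iteratedDeriv_succ, iteratedDeriv_succ, iteratedDeriv_succ, iteratedDeriv_one, e4]
  rw [i2, i3, i4]; ring
end

section
/- Let 𝔤 be a Lie algebra with a triangular-type decomposition 𝔤 = 𝔟̄ ⊕ 𝔫 into subalgebras, and let η : 𝔫 → ℂ be a Lie algebra character, extended to an algebra homomorphism η : U(𝔫) → ℂ with kernel U_η(𝔫). Then U(𝔤) = U(𝔟̄) ⊕ U(𝔤)U_η(𝔫) as vector spaces, and the projection ρ_η : U(𝔤) → U(𝔟̄), u ↦ u^η, restricted to the center Z(𝔤) of U(𝔤), is an algebra homomorphism: (uv)^η = u^η v^η for u, v ∈ Z(𝔤). -/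
attribute [local instance 100] LieRing.ofAssociativeRing

open UniversalEnvelopingAlgebra

set_option synthInstance.maxHeartbeats 1000000
set_option maxHeartbeats 2000000

namespace Stmt6

variable {g : Type*} [LieRing g] [LieAlgebra ℂ g]
variable (bb nn : LieSubalgebra ℂ g)
variable (η : nn →ₗ⁅ℂ⁆ ℂ)

local notation "U" => UniversalEnvelopingAlgebra ℂ g
local notation "ι" => UniversalEnvelopingAlgebra.ι ℂ

/-- adjoin of the range of ι is everything -/
theorem adjoin_range_ι : Algebra.adjoin ℂ (Set.range (ι : g →ₗ⁅ℂ⁆ U)) = ⊤ := by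
  set S := Algebra.adjoin ℂ (Set.range (ι : g →ₗ⁅ℂ⁆ U)) with hS
  have hmem : ∀ x : g, (ι x : U) ∈ S := fun x => Algebra.subset_adjoin ⟨x, rfl⟩
  let ι' : g →ₗ⁅ℂ⁆ S :=
    { toFun := fun x => ⟨ι x, hmem x⟩
      map_add' := fun x y => Subtype.ext (by simp)
      map_smul' := fun c x => Subtype.ext (by simp)
      map_lie' := fun {x y} => Subtype.ext (by
        show (ι ⁅x, y⁆ : U) = ((⁅(⟨ι x, hmem x⟩ : S), (⟨ι y, hmem y⟩ : S)⁆ : S) : U)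
        rw [LieHom.map_lie]
        rw [Ring.lie_def, Ring.lie_def]
        push_cast
        rfl) }
  have key : ∀ u : U, (S.val (lift ℂ ι' u) : U) = u := by
    have : S.val.comp (lift ℂ ι') = AlgHom.id ℂ U := by
      apply UniversalEnvelopingAlgebra.hom_ext
      ext x
      simp [lift_ι_apply, ι']
    intro u
    exact DFunLike.congr_fun this u
  rw [eq_top_iff]
  intro u _
  rw [hS]
  exact key u ▸ (lift ℂ ι' u).2


/-- U(bb) inside U -/
noncomputable def Ub : Subalgebra ℂ U := Algebra.adjoin ℂ ((ι : g →ₗ⁅ℂ⁆ U) '' (bb : Set g))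

/-- the left ideal -/
noncomputable def Jid : Submodule ℂ U := Submodule.span ℂ
  {w : U | ∃ u : U, ∃ x : nn, w = u * ((ι : g →ₗ⁅ℂ⁆ U) (x : g) - algebraMap ℂ U (η x))}

theorem Jid_mul_left (u : U) {j : U} (hj : j ∈ Jid nn η) : u * j ∈ Jid nn η := by
  induction hj using Submodule.span_induction with
  | mem w hw =>
    obtain ⟨u', x, rfl⟩ := hw
    exact Submodule.subset_span ⟨u * u', x, (mul_assoc _ _ _).symm⟩
  | zero => simpa using (Jid nn η).zero_mem
  | add a b _ _ ha hb => rw [mul_add]; exact (Jid nn η).add_mem ha hb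
  | smul c a _ ha => rw [mul_smul_comm]; exact (Jid nn η).smul_mem c ha

noncomputable def qprod : List nn → U
  | [] => 1
  | x :: l => qprod l * ((ι : g →ₗ⁅ℂ⁆ U) (x : g) - algebraMap ℂ U (η x))

/-- span of Ub * monomials in the (ι x - η x) -/
noncomputable def Wsub : Submodule ℂ U :=
  Submodule.span ℂ {w : U | ∃ a : U, a ∈ Ub bb ∧ ∃ l : List nn, w = a * qprod nn η l}

theorem Ub_le_W {a : U} (ha : a ∈ Ub bb) : a ∈ Wsub bb nn η :=
  Submodule.subset_span ⟨a, ha, [], (mul_one a).symm⟩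

theorem W_mul_q {w : U} (hw : w ∈ Wsub bb nn η) (x : nn) :
    w * ((ι : g →ₗ⁅ℂ⁆ U) (x : g) - algebraMap ℂ U (η x)) ∈ Wsub bb nn η := by
  induction hw using Submodule.span_induction with
  | mem w hw =>
    obtain ⟨a, ha, l, rfl⟩ := hw
    exact Submodule.subset_span ⟨a, ha, x :: l, by rw [qprod, mul_assoc]⟩
  | zero => simpa using (Wsub bb nn η).zero_mem
  | add a b _ _ ha hb => rw [add_mul]; exact (Wsub bb nn η).add_mem ha hb
  | smul c a _ ha => rw [smul_mul_assoc]; exact (Wsub bb nn η).smul_mem c ha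

theorem key_codisj (hcompl : IsCompl (bb : Submodule ℂ g) (nn : Submodule ℂ g))
    (l : List nn) : ∀ (a : U), a ∈ Ub bb → ∀ z : g,
    a * qprod nn η l * (ι : g →ₗ⁅ℂ⁆ U) z ∈ Wsub bb nn η := by
  induction l with
  | nil =>
    intro a ha z
    -- decompose z
    have hz : ∃ b : bb, ∃ x : nn, z = (b : g) + (x : g) := by
      have : z ∈ (bb : Submodule ℂ g) ⊔ (nn : Submodule ℂ g) := by
        rw [hcompl.sup_eq_top]; trivial
      
      obtain ⟨b, hb, x, hx, h⟩ := Submodule.mem_sup.mp this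
      exact ⟨⟨b, hb⟩, ⟨x, hx⟩, h.symm⟩
    obtain ⟨b, x, rfl⟩ := hz
    rw [qprod, mul_one, map_add, mul_add]
    refine (Wsub bb nn η).add_mem ?_ ?_
    · exact Ub_le_W bb nn η ((Ub bb).mul_mem ha (Algebra.subset_adjoin ⟨(b : g), b.2, rfl⟩))
    · have : a * (ι : g →ₗ⁅ℂ⁆ U) (x : g) =
          a * ((ι : g →ₗ⁅ℂ⁆ U) (x : g) - algebraMap ℂ U (η x)) + η x • a := by
        rw [mul_sub]
        rw [Algebra.algebraMap_eq_smul_one]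
        rw [mul_smul_comm, mul_one]
        abel
      rw [this]
      refine (Wsub bb nn η).add_mem ?_ ((Wsub bb nn η).smul_mem _ (Ub_le_W bb nn η ha))
      have := W_mul_q bb nn η (Ub_le_W bb nn η ha) x
      simpa [qprod] using this
  | cons x l ih =>
    intro a ha z
    have expand : a * qprod nn η (x :: l) * (ι : g →ₗ⁅ℂ⁆ U) z =
        (a * qprod nn η l * (ι : g →ₗ⁅ℂ⁆ U) z) *
          ((ι : g →ₗ⁅ℂ⁆ U) (x : g) - algebraMap ℂ U (η x)) +
        a * qprod nn η l * (ι : g →ₗ⁅ℂ⁆ U) ⁅(x : g), z⁆ := by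
      have hcomm : ((ι : g →ₗ⁅ℂ⁆ U) (x : g) - algebraMap ℂ U (η x)) * (ι : g →ₗ⁅ℂ⁆ U) z =
          (ι : g →ₗ⁅ℂ⁆ U) z * ((ι : g →ₗ⁅ℂ⁆ U) (x : g) - algebraMap ℂ U (η x)) +
            (ι : g →ₗ⁅ℂ⁆ U) ⁅(x : g), z⁆ := by
        have h1 : (ι : g →ₗ⁅ℂ⁆ U) ⁅(x : g), z⁆ = ⁅(ι : g →ₗ⁅ℂ⁆ U) (x : g), (ι : g →ₗ⁅ℂ⁆ U) z⁆ :=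
          LieHom.map_lie _ _ _
        rw [h1, Ring.lie_def, sub_mul, mul_sub, Algebra.commutes (η x) ((ι : g →ₗ⁅ℂ⁆ U) z)]
        abel
      rw [qprod, ← mul_assoc a, mul_assoc (a * qprod nn η l), hcomm, mul_add, ← mul_assoc]
    rw [expand]
    exact (Wsub bb nn η).add_mem (W_mul_q bb nn η (ih a ha z) x) (ih a ha ⁅(x : g), z⁆)

theorem W_eq_top (hcompl : IsCompl (bb : Submodule ℂ g) (nn : Submodule ℂ g)) : Wsub bb nn η = ⊤ := by
  rw [eq_top_iff]
  rintro u -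
  have hu : u ∈ Algebra.adjoin ℂ (Set.range (ι : g →ₗ⁅ℂ⁆ U)) := by
    rw [adjoin_range_ι]; trivial
  have one_mem : (1 : U) ∈ Wsub bb nn η := Ub_le_W bb nn η (Ub bb).one_mem
  -- prove: ∀ w ∈ W, w * u ∈ W
  have main : ∀ w ∈ Wsub bb nn η, w * u ∈ Wsub bb nn η := by
    induction hu using Algebra.adjoin_induction with
    | mem v hv =>
      obtain ⟨z, rfl⟩ := hv
      intro w hw
      induction hw using Submodule.span_induction with
      | mem w hw =>
        obtain ⟨a, ha, l, rfl⟩ := hw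
        exact key_codisj bb nn η hcompl l a ha z
      | zero => simpa using (Wsub bb nn η).zero_mem
      | add a b _ _ ha hb => rw [add_mul]; exact (Wsub bb nn η).add_mem ha hb
      | smul c a _ ha => rw [smul_mul_assoc]; exact (Wsub bb nn η).smul_mem c ha
    | algebraMap c =>
      intro w hw
      rw [Algebra.algebraMap_eq_smul_one, mul_smul_comm, mul_one]
      exact (Wsub bb nn η).smul_mem c hw
    | add v₁ v₂ _ _ h₁ h₂ =>
      intro w hw
      rw [mul_add]
      exact (Wsub bb nn η).add_mem (h₁ w hw) (h₂ w hw)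
    | mul v₁ v₂ _ _ h₁ h₂ =>
      intro w hw
      rw [← mul_assoc]
      exact h₂ _ (h₁ w hw)
  simpa using main 1 one_mem

theorem W_le_sup : Wsub bb nn η ≤ (Ub bb).toSubmodule ⊔ Jid nn η := by
  rw [Wsub, Submodule.span_le]
  rintro w ⟨a, ha, l, rfl⟩
  cases l with
  | nil => exact Submodule.mem_sup_left (by simpa [qprod] using ha)
  | cons x l =>
    refine Submodule.mem_sup_right ?_
    rw [qprod, ← mul_assoc]
    exact Submodule.subset_span ⟨a * qprod nn η l, x, rfl⟩

theorem codisj (hcompl : IsCompl (bb : Submodule ℂ g) (nn : Submodule ℂ g)) : Codisjoint (Ub bb).toSubmodule (Jid nn η) := by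
  rw [codisjoint_iff, eq_top_iff, ← W_eq_top bb nn η hcompl]
  exact W_le_sup bb nn η


/-! ### The induced module construction (for disjointness) -/

/-- basis of bb -/
noncomputable def BB : Module.Basis (Module.Basis.ofVectorSpaceIndex ℂ bb) ℂ bb := Module.Basis.ofVectorSpace ℂ bb

/-- the free associative algebra on the basis of bb -/
abbrev Am (bb : LieSubalgebra ℂ g) : Type _ :=
  MonoidAlgebra ℂ (FreeMonoid (Module.Basis.ofVectorSpaceIndex ℂ bb))

/-- the linear embedding of bb into Am -/
noncomputable def emb : bb →ₗ[ℂ] Am bb :=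
  (Finsupp.linearCombination ℂ
    (fun i => MonoidAlgebra.single (FreeMonoid.of i) (1 : ℂ))) ∘ₗ
    ((BB bb).repr : bb →ₗ[ℂ] _)

theorem emb_basis (i : Module.Basis.ofVectorSpaceIndex ℂ bb) :
    emb bb (BB bb i) = MonoidAlgebra.single (FreeMonoid.of i) (1 : ℂ) := by
  rw [emb]
  simp only [LinearMap.coe_comp, Function.comp_apply, LinearEquiv.coe_coe]
  rw [Module.Basis.repr_self, Finsupp.linearCombination_single, one_smul]


variable (hcompl : IsCompl (bb : Submodule ℂ g) (nn : Submodule ℂ g))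

/-- projection onto bb -/
noncomputable def qp : g →ₗ[ℂ] bb :=
  Submodule.linearProjOfIsCompl (bb : Submodule ℂ g) (nn : Submodule ℂ g) hcompl

/-- projection onto nn -/
noncomputable def pp : g →ₗ[ℂ] nn :=
  Submodule.linearProjOfIsCompl (nn : Submodule ℂ g) (bb : Submodule ℂ g) hcompl.symm

theorem qp_pp (z : g) : ((qp bb nn hcompl z : g) + (pp bb nn hcompl z : g)) = z :=
  Submodule.projection_add_projection_eq_self hcompl z

/-- base case of the recursion -/
noncomputable def lin1 : g →ₗ[ℂ] Am bb :=
  emb bb ∘ₗ qp bb nn hcompl +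
    Algebra.linearMap ℂ (Am bb) ∘ₗ ((η : nn →ₗ[ℂ] ℂ) ∘ₗ pp bb nn hcompl)

theorem lin1_apply (z : g) : lin1 bb nn η hcompl z =
    emb bb (qp bb nn hcompl z) + algebraMap ℂ (Am bb) (η (pp bb nn hcompl z)) := rfl

/-- the recursively defined action on monomials -/
noncomputable def phi : List (Module.Basis.ofVectorSpaceIndex ℂ bb) → g →ₗ[ℂ] Am bb
  | [] => lin1 bb nn η hcompl
  | i :: l => LinearMap.mulLeft ℂ (MonoidAlgebra.single (FreeMonoid.of i) (1 : ℂ)) ∘ₗ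
        phi l - phi l ∘ₗ (LieAlgebra.ad ℂ g ((BB bb i : g)))

theorem phi_cons (i : Module.Basis.ofVectorSpaceIndex ℂ bb) (l : List (Module.Basis.ofVectorSpaceIndex ℂ bb))
    (x : g) : phi bb nn η hcompl (i :: l) x =
      MonoidAlgebra.single (FreeMonoid.of i) (1 : ℂ) * phi bb nn η hcompl l x
        - phi bb nn η hcompl l ⁅(BB bb i : g), x⁆ := rfl

/-- the action, extended to Am -/
noncomputable def PhiOf (x : g) : Am bb →ₗ[ℂ] Am bb :=
  (Finsupp.lsum ℂ fun m => LinearMap.toSpanSingleton ℂ (Am bb)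
    (phi bb nn η hcompl (FreeMonoid.toList m) x)) ∘ₗ (MonoidAlgebra.coeffLinearEquiv ℂ).toLinearMap

theorem PhiOf_single (x : g) (m : FreeMonoid (Module.Basis.ofVectorSpaceIndex ℂ bb)) (c : ℂ) :
    PhiOf bb nn η hcompl x (MonoidAlgebra.single m c) =
      c • phi bb nn η hcompl (FreeMonoid.toList m) x := by
  rw [PhiOf, LinearMap.comp_apply]
  erw [Finsupp.lsum_single]
  rw [LinearMap.toSpanSingleton_apply]


theorem PhiOf_one (x : g) : PhiOf bb nn η hcompl x 1 = lin1 bb nn η hcompl x := by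
  have : (1 : Am bb) = MonoidAlgebra.single 1 (1 : ℂ) := rfl
  rw [this, PhiOf_single, one_smul]
  rfl

/-- the action as a bundled linear map in x -/
noncomputable def PhiL : g →ₗ[ℂ] Module.End ℂ (Am bb) where
  toFun := PhiOf bb nn η hcompl
  map_add' x y := by
    refine MonoidAlgebra.lhom_ext' fun m => LinearMap.ext fun c => ?_
    show PhiOf bb nn η hcompl (x + y) (MonoidAlgebra.single m c) =
      PhiOf bb nn η hcompl x (MonoidAlgebra.single m c) +
        PhiOf bb nn η hcompl y (MonoidAlgebra.single m c)
    rw [PhiOf_single, PhiOf_single, PhiOf_single, map_add, smul_add]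
  map_smul' a x := by
    refine MonoidAlgebra.lhom_ext' fun m => LinearMap.ext fun c => ?_
    show PhiOf bb nn η hcompl (a • x) (MonoidAlgebra.single m c) =
      a • PhiOf bb nn η hcompl x (MonoidAlgebra.single m c)
    rw [PhiOf_single, PhiOf_single, map_smul, smul_comm]

theorem PhiL_single (x : g) (m : FreeMonoid (Module.Basis.ofVectorSpaceIndex ℂ bb)) (c : ℂ) :
    PhiL bb nn η hcompl x (MonoidAlgebra.single m c) =
      c • phi bb nn η hcompl (FreeMonoid.toList m) x := PhiOf_single bb nn η hcompl x m c

theorem PhiL_one (x : g) : PhiL bb nn η hcompl x 1 = lin1 bb nn η hcompl x :=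
  PhiOf_one bb nn η hcompl x

theorem PhiL_mul_single (x : g) (i : Module.Basis.ofVectorSpaceIndex ℂ bb) (s : Am bb) :
    PhiL bb nn η hcompl x (MonoidAlgebra.single (FreeMonoid.of i) (1 : ℂ) * s) =
      MonoidAlgebra.single (FreeMonoid.of i) (1 : ℂ) * PhiL bb nn η hcompl x s +
        PhiL bb nn η hcompl ⁅x, (BB bb i : g)⁆ s := by
  induction s using MonoidAlgebra.induction_linear with
  | zero => simp
  | add a b ha hb =>
    simp only [mul_add, map_add]
    rw [ha, hb]
    abel
  | single m c =>
    rw [MonoidAlgebra.single_mul_single, one_mul, PhiL_single, PhiL_single, PhiL_single]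
    have htl : FreeMonoid.toList (FreeMonoid.of i * m) = i :: FreeMonoid.toList m :=
      FreeMonoid.toList_of_mul i m
    rw [htl, phi_cons, smul_sub, mul_smul_comm]
    have : phi bb nn η hcompl (FreeMonoid.toList m) ⁅x, (BB bb i : g)⁆ =
        - phi bb nn η hcompl (FreeMonoid.toList m) ⁅(BB bb i : g), x⁆ := by
      rw [← lie_skew, map_neg]
    rw [this, smul_neg]
    abel


theorem PhiL_mul_emb (b : bb) (x : g) (s : Am bb) :
    PhiL bb nn η hcompl x (emb bb b * s) =
      emb bb b * PhiL bb nn η hcompl x s + PhiL bb nn η hcompl ⁅x, (b : g)⁆ s := by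
  have hb : (b : bb) ∈ Submodule.span ℂ (Set.range (BB bb)) := by
    rw [Module.Basis.span_eq]; trivial
  induction hb using Submodule.span_induction with
  | mem v hv =>
    obtain ⟨i, rfl⟩ := hv
    rw [emb_basis, PhiL_mul_single]
  | zero =>
    simp
  | add v₁ v₂ _ _ h₁ h₂ =>
    have hcoe : ((v₁ + v₂ : bb) : g) = (v₁ : g) + (v₂ : g) := rfl
    rw [map_add, add_mul, map_add, h₁, h₂, hcoe, lie_add, map_add, LinearMap.add_apply,
      add_mul]
    abel
  | smul c v _ h =>
    have hcoe : ((c • v : bb) : g) = c • (v : g) := rfl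
    rw [map_smul, smul_mul_assoc, map_smul, h, hcoe, lie_smul, map_smul, LinearMap.smul_apply,
      smul_add, smul_mul_assoc]

/-- the defining relations of U(bb) inside Am -/
noncomputable def rel (a b : bb) : Am bb :=
  emb bb ⁅a, b⁆ + emb bb b * emb bb a - emb bb a * emb bb b

/-- the (two-sided) ideal of relations, as a submodule -/
noncomputable def Idl : Submodule ℂ (Am bb) :=
  Submodule.span ℂ {z | ∃ u w : Am bb, ∃ a b : bb, z = u * rel bb a b * w}

theorem Idl_mul_left (u : Am bb) {j : Am bb} (hj : j ∈ Idl bb) : u * j ∈ Idl bb := by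
  induction hj using Submodule.span_induction with
  | mem w hw =>
    obtain ⟨u', w', a, b, rfl⟩ := hw
    exact Submodule.subset_span ⟨u * u', w', a, b, by rw [← mul_assoc, ← mul_assoc]⟩
  | zero => simpa using (Idl bb).zero_mem
  | add a b _ _ ha hb => rw [mul_add]; exact (Idl bb).add_mem ha hb
  | smul c a _ ha => rw [mul_smul_comm]; exact (Idl bb).smul_mem c ha

theorem Idl_mul_right {j : Am bb} (hj : j ∈ Idl bb) (w : Am bb) : j * w ∈ Idl bb := by
  induction hj using Submodule.span_induction with
  | mem z hz =>
    obtain ⟨u', w', a, b, rfl⟩ := hz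
    exact Submodule.subset_span ⟨u', w' * w, a, b, by rw [mul_assoc, mul_assoc]⟩
  | zero => simpa using (Idl bb).zero_mem
  | add a b _ _ ha hb => rw [add_mul]; exact (Idl bb).add_mem ha hb
  | smul c a _ ha => rw [smul_mul_assoc]; exact (Idl bb).smul_mem c ha

theorem rel_mem_Idl (a b : bb) (w : Am bb) : rel bb a b * w ∈ Idl bb :=
  Submodule.subset_span ⟨1, w, a, b, by rw [one_mul]⟩

theorem single_one_algebraMap (c : ℂ) :
    (MonoidAlgebra.single (1 : FreeMonoid (Module.Basis.ofVectorSpaceIndex ℂ bb)) c : Am bb) =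
      algebraMap ℂ (Am bb) c := by
  rw [MonoidAlgebra.coe_algebraMap]
  simp


theorem qp_coe (b : bb) : qp bb nn hcompl (b : g) = b :=
  Submodule.linearProjOfIsCompl_apply_left hcompl b

theorem pp_coe (b : bb) : pp bb nn hcompl (b : g) = 0 :=
  Submodule.linearProjOfIsCompl_apply_right' hcompl.symm b.2

theorem qp_coe_n (x : nn) : qp bb nn hcompl (x : g) = 0 :=
  Submodule.linearProjOfIsCompl_apply_right' hcompl x.2

theorem pp_coe_n (x : nn) : pp bb nn hcompl (x : g) = x :=
  Submodule.linearProjOfIsCompl_apply_left hcompl.symm x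

theorem lin1_coe_b (b : bb) : lin1 bb nn η hcompl (b : g) = emb bb b := by
  rw [lin1_apply, qp_coe bb nn hcompl, pp_coe bb nn hcompl]
  simp

theorem lin1_coe_n (x : nn) : lin1 bb nn η hcompl (x : g) = algebraMap ℂ (Am bb) (η x) := by
  rw [lin1_apply, qp_coe_n bb nn hcompl, pp_coe_n bb nn hcompl]
  simp

/-- P3: on the quotient, elements of bb act by left multiplication -/
theorem phib_aux (l : List (Module.Basis.ofVectorSpaceIndex ℂ bb)) : ∀ (b : bb) (c : ℂ),
    PhiL bb nn η hcompl (b : g) (MonoidAlgebra.single (FreeMonoid.ofList l) c) -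
      emb bb b * MonoidAlgebra.single (FreeMonoid.ofList l) c ∈ Idl bb := by
  induction l with
  | nil =>
    intro b c
    have h1 : PhiL bb nn η hcompl (b : g) (MonoidAlgebra.single (FreeMonoid.ofList []) c) =
        c • emb bb b := by
      rw [PhiL_single, FreeMonoid.toList_ofList]
      show c • phi bb nn η hcompl [] (b : g) = c • emb bb b
      rw [phi, lin1_coe_b]
    have h2 : emb bb b * MonoidAlgebra.single (FreeMonoid.ofList []) c = c • emb bb b := by
      show emb bb b * MonoidAlgebra.single (1 : FreeMonoid _) c = c • emb bb b
      rw [single_one_algebraMap, ← Algebra.commutes, Algebra.smul_def]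
    rw [h1, h2, sub_self]
    exact (Idl bb).zero_mem
  | cons i l ih =>
    intro b c
    have hsingle : MonoidAlgebra.single (FreeMonoid.ofList (i :: l)) c =
        MonoidAlgebra.single (FreeMonoid.of i) (1 : ℂ) *
          MonoidAlgebra.single (FreeMonoid.ofList l) c := by
      rw [MonoidAlgebra.single_mul_single, one_mul, FreeMonoid.ofList_cons]
    set s := MonoidAlgebra.single (FreeMonoid.ofList l) c with hs
    have key : PhiL bb nn η hcompl (b : g) (MonoidAlgebra.single (FreeMonoid.ofList (i :: l)) c)
        - emb bb b * MonoidAlgebra.single (FreeMonoid.ofList (i :: l)) c =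
        MonoidAlgebra.single (FreeMonoid.of i) (1 : ℂ) *
            (PhiL bb nn η hcompl (b : g) s - emb bb b * s) +
          (PhiL bb nn η hcompl ((⁅b, BB bb i⁆ : bb) : g) s - emb bb ⁅b, BB bb i⁆ * s) +
          rel bb b (BB bb i) * s := by
      rw [hsingle, PhiL_mul_single]
      have hbr : (⁅(b : g), (BB bb i : g)⁆ : g) = ((⁅b, BB bb i⁆ : bb) : g) :=
        (LieSubalgebra.coe_bracket bb b (BB bb i)).symm
      rw [hbr, rel, emb_basis]
      noncomm_ring
    rw [key]
    refine (Idl bb).add_mem ((Idl bb).add_mem ?_ ?_) (rel_mem_Idl bb b (BB bb i) s)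
    · exact Idl_mul_left bb _ (ih b c)
    · exact ih ⁅b, BB bb i⁆ c

theorem phib (b : bb) (t : Am bb) :
    PhiL bb nn η hcompl (b : g) t - emb bb b * t ∈ Idl bb := by
  have main : ∀ t : Am bb,
      (PhiL bb nn η hcompl (b : g) - LinearMap.mulLeft ℂ (emb bb b)) t ∈ Idl bb := by
    intro t
    induction t using MonoidAlgebra.induction_linear with
    | zero => simpa using (Idl bb).zero_mem
    | add a b' ha hb' =>
      rw [map_add]
      exact (Idl bb).add_mem ha hb'
    | single m c =>
      rw [LinearMap.sub_apply, LinearMap.mulLeft_apply]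
      have := phib_aux bb nn η hcompl (FreeMonoid.toList m) b c
      rwa [FreeMonoid.ofList_toList] at this
  have := main t
  rwa [LinearMap.sub_apply, LinearMap.mulLeft_apply] at this


theorem eta_bracket (a b : nn) : η ⁅a, b⁆ = 0 := by
  rw [LieHom.map_lie, Ring.lie_def]
  ring

theorem lin1_decomp (b : bb) (n : nn) :
    lin1 bb nn η hcompl ((b : g) + (n : g)) = emb bb b + η n • (1 : Am bb) := by
  rw [map_add, lin1_coe_b, lin1_coe_n, Algebra.algebraMap_eq_smul_one]

theorem PhiL_emb (x : g) (b : bb) :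
    PhiL bb nn η hcompl x (emb bb b) =
      emb bb b * lin1 bb nn η hcompl x + lin1 bb nn η hcompl ⁅x, (b : g)⁆ := by
  have := PhiL_mul_emb bb nn η hcompl b x 1
  rw [mul_one] at this
  rw [this, PhiL_one, PhiL_one]

theorem PhiLie_one (b1 b2 : bb) (n1 n2 : nn) :
    PhiL bb nn η hcompl ⁅(b1 : g) + (n1 : g), (b2 : g) + (n2 : g)⁆ (1 : Am bb) -
      (PhiL bb nn η hcompl ((b1 : g) + (n1 : g))
          (PhiL bb nn η hcompl ((b2 : g) + (n2 : g)) (1 : Am bb)) -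
        PhiL bb nn η hcompl ((b2 : g) + (n2 : g))
          (PhiL bb nn η hcompl ((b1 : g) + (n1 : g)) (1 : Am bb))) =
      - rel bb b1 b2 := by
  set x := (b1 : g) + (n1 : g) with hx
  set y := (b2 : g) + (n2 : g) with hy
  have hxy : PhiL bb nn η hcompl x (PhiL bb nn η hcompl y (1 : Am bb)) =
      emb bb b2 * lin1 bb nn η hcompl x + lin1 bb nn η hcompl ⁅x, (b2 : g)⁆ +
        η n2 • lin1 bb nn η hcompl x := by
    rw [PhiL_one, hy, lin1_decomp, map_add, map_smul, PhiL_emb, PhiL_one]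
  have hyx : PhiL bb nn η hcompl y (PhiL bb nn η hcompl x (1 : Am bb)) =
      emb bb b1 * lin1 bb nn η hcompl y + lin1 bb nn η hcompl ⁅y, (b1 : g)⁆ +
        η n1 • lin1 bb nn η hcompl y := by
    rw [PhiL_one, hx, lin1_decomp, map_add, map_smul, PhiL_emb, PhiL_one]
  have harg : ⁅x, y⁆ - ⁅x, (b2 : g)⁆ + ⁅y, (b1 : g)⁆ =
      ((⁅n1, n2⁆ : nn) : g) - ((⁅b1, b2⁆ : bb) : g) := by
    rw [hx, hy]
    simp only [add_lie, lie_add, LieSubalgebra.coe_bracket]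
    rw [show ⁅(b2 : g), (b1 : g)⁆ = -⁅(b1 : g), (b2 : g)⁆ by rw [← lie_skew],
      show ⁅(n2 : g), (b1 : g)⁆ = -⁅(b1 : g), (n2 : g)⁆ by rw [← lie_skew]]
    abel
  have hbr : lin1 bb nn η hcompl ⁅x, y⁆ - lin1 bb nn η hcompl ⁅x, (b2 : g)⁆ +
      lin1 bb nn η hcompl ⁅y, (b1 : g)⁆ = - emb bb ⁅b1, b2⁆ := by
    rw [← map_sub, ← map_add, harg, map_sub, lin1_coe_n, lin1_coe_b,
      eta_bracket nn η, map_zero, zero_sub]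
  have hbr' : lin1 bb nn η hcompl ⁅x, y⁆ = - emb bb ⁅b1, b2⁆ +
      lin1 bb nn η hcompl ⁅x, (b2 : g)⁆ - lin1 bb nn η hcompl ⁅y, (b1 : g)⁆ := by
    rw [← hbr]; abel
  rw [PhiL_one, hxy, hyx, hbr', rel]
  rw [hx, hy, lin1_decomp, lin1_decomp]
  simp only [mul_add, mul_smul_comm, smul_add, mul_one, smul_smul]
  module


/-- the "Lie defect" operator -/
noncomputable def Dop (x y : g) : Module.End ℂ (Am bb) :=
  PhiL bb nn η hcompl ⁅x, y⁆ - PhiL bb nn η hcompl x ∘ₗ PhiL bb nn η hcompl y +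
    PhiL bb nn η hcompl y ∘ₗ PhiL bb nn η hcompl x

theorem Dop_apply (x y : g) (t : Am bb) : Dop bb nn η hcompl x y t =
    PhiL bb nn η hcompl ⁅x, y⁆ t - PhiL bb nn η hcompl x (PhiL bb nn η hcompl y t) +
      PhiL bb nn η hcompl y (PhiL bb nn η hcompl x t) := rfl

theorem single_one_mul (c : ℂ) (z : Am bb) :
    MonoidAlgebra.single (1 : FreeMonoid (Module.Basis.ofVectorSpaceIndex ℂ bb)) c * z = c • z := by
  rw [single_one_algebraMap, ← Algebra.smul_def]

theorem Dop_one_mem (x y : g) : Dop bb nn η hcompl x y (1 : Am bb) ∈ Idl bb := by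
  have hx := qp_pp bb nn hcompl x
  have hy := qp_pp bb nn hcompl y
  rw [Dop_apply, sub_add]
  rw [← hx, ← hy]
  rw [PhiLie_one]
  exact (Idl bb).neg_mem (Submodule.subset_span ⟨1, 1, _, _, by rw [one_mul, mul_one]⟩)

theorem Dop_cons (x y : g) (i : Module.Basis.ofVectorSpaceIndex ℂ bb) (s : Am bb) :
    Dop bb nn η hcompl x y (MonoidAlgebra.single (FreeMonoid.of i) (1 : ℂ) * s) =
      MonoidAlgebra.single (FreeMonoid.of i) (1 : ℂ) * Dop bb nn η hcompl x y s +
        Dop bb nn η hcompl ⁅x, (BB bb i : g)⁆ y s -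
        Dop bb nn η hcompl ⁅y, (BB bb i : g)⁆ x s := by
  set c : g := (BB bb i : g)
  have hjac : ⁅⁅x, y⁆, c⁆ - ⁅⁅x, c⁆, y⁆ + ⁅⁅y, c⁆, x⁆ = 0 := by
    rw [lie_lie x y c, ← lie_skew ⁅x, c⁆ y, ← lie_skew ⁅y, c⁆ x]
    abel
  have hz : PhiL bb nn η hcompl (⁅⁅x, y⁆, c⁆ - ⁅⁅x, c⁆, y⁆ + ⁅⁅y, c⁆, x⁆) s = 0 := by
    rw [hjac, map_zero, LinearMap.zero_apply]
  have hexp : PhiL bb nn η hcompl (⁅⁅x, y⁆, c⁆ - ⁅⁅x, c⁆, y⁆ + ⁅⁅y, c⁆, x⁆) s =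
      PhiL bb nn η hcompl ⁅⁅x, y⁆, c⁆ s - PhiL bb nn η hcompl ⁅⁅x, c⁆, y⁆ s +
        PhiL bb nn η hcompl ⁅⁅y, c⁆, x⁆ s := by
    rw [map_add, map_sub, LinearMap.add_apply, LinearMap.sub_apply]
  simp only [Dop_apply]
  simp only [PhiL_mul_single, map_add, map_sub, mul_add, mul_sub]
  have h0 : PhiL bb nn η hcompl ⁅⁅x, y⁆, c⁆ s - PhiL bb nn η hcompl ⁅⁅x, c⁆, y⁆ s +
      PhiL bb nn η hcompl ⁅⁅y, c⁆, x⁆ s = 0 := by rw [← hexp, hz]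
  have h0' : PhiL bb nn η hcompl ⁅⁅x, y⁆, c⁆ s = PhiL bb nn η hcompl ⁅⁅x, c⁆, y⁆ s -
      PhiL bb nn η hcompl ⁅⁅y, c⁆, x⁆ s := by
    rw [← sub_eq_zero]; rw [← h0]; abel
  rw [h0']
  abel

theorem Dop_mem (x y : g) (t : Am bb) : Dop bb nn η hcompl x y t ∈ Idl bb := by
  induction t using MonoidAlgebra.induction_linear generalizing x y with
  | zero => simpa using (Idl bb).zero_mem
  | add a b ha hb =>
    rw [map_add]
    exact (Idl bb).add_mem (ha x y) (hb x y)
  | single m c =>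
    rw [← FreeMonoid.ofList_toList m]
    generalize FreeMonoid.toList m = l
    induction l generalizing x y with
    | nil =>
      show Dop bb nn η hcompl x y
        (MonoidAlgebra.single (FreeMonoid.ofList []) c) ∈ Idl bb
      have h1 : MonoidAlgebra.single
          (FreeMonoid.ofList ([] : List (Module.Basis.ofVectorSpaceIndex ℂ bb))) c =
          c • (1 : Am bb) := by
        rw [← single_one_mul bb c (1 : Am bb), mul_one]
        rfl
      rw [h1, map_smul]
      exact (Idl bb).smul_mem c (Dop_one_mem bb nn η hcompl x y)
    | cons i l ih =>
      show Dop bb nn η hcompl x y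
        (MonoidAlgebra.single (FreeMonoid.ofList (i :: l)) c) ∈ Idl bb
      have hsplit : MonoidAlgebra.single (FreeMonoid.ofList (i :: l)) c =
          MonoidAlgebra.single (FreeMonoid.of i) (1 : ℂ) *
            MonoidAlgebra.single (FreeMonoid.ofList l) c := by
        rw [MonoidAlgebra.single_mul_single, one_mul, FreeMonoid.ofList_cons]
      rw [hsplit, Dop_cons]
      refine (Idl bb).sub_mem ((Idl bb).add_mem ?_ ?_) ?_
      · exact Idl_mul_left bb _ (ih x y)
      · exact ih ⁅x, (BB bb i : g)⁆ y
      · exact ih ⁅y, (BB bb i : g)⁆ x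


theorem PhiL_rel (x : g) (a b : bb) (w : Am bb) :
    PhiL bb nn η hcompl x (rel bb a b * w) = rel bb a b * PhiL bb nn η hcompl x w := by
  have hz : ⁅x, ((⁅a, b⁆ : bb) : g)⁆ + ⁅⁅x, (b : g)⁆, (a : g)⁆ - ⁅⁅x, (a : g)⁆, (b : g)⁆ = 0 := by
    rw [LieSubalgebra.coe_bracket, leibniz_lie x (a : g) (b : g),
      ← lie_skew ⁅x, (b : g)⁆ (a : g)]
    abel
  have hzero : PhiL bb nn η hcompl ⁅x, ((⁅a, b⁆ : bb) : g)⁆ w +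
      PhiL bb nn η hcompl ⁅⁅x, (b : g)⁆, (a : g)⁆ w -
      PhiL bb nn η hcompl ⁅⁅x, (a : g)⁆, (b : g)⁆ w = 0 := by
    have : PhiL bb nn η hcompl
        (⁅x, ((⁅a, b⁆ : bb) : g)⁆ + ⁅⁅x, (b : g)⁆, (a : g)⁆ - ⁅⁅x, (a : g)⁆, (b : g)⁆) w = 0 := by
      rw [hz, map_zero, LinearMap.zero_apply]
    rw [map_sub, map_add, LinearMap.sub_apply, LinearMap.add_apply] at this
    exact this
  have hexpand : rel bb a b * w =
      emb bb ⁅a, b⁆ * w + emb bb b * (emb bb a * w) - emb bb a * (emb bb b * w) := by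
    rw [rel, sub_mul, add_mul, mul_assoc, mul_assoc]
  rw [hexpand, map_sub, map_add]
  simp only [PhiL_mul_emb, mul_add]
  rw [rel, sub_mul, add_mul, mul_assoc, mul_assoc]
  rw [show PhiL bb nn η hcompl ⁅x, ((⁅a, b⁆ : bb) : g)⁆ w =
      - PhiL bb nn η hcompl ⁅⁅x, (b : g)⁆, (a : g)⁆ w +
        PhiL bb nn η hcompl ⁅⁅x, (a : g)⁆, (b : g)⁆ w by
    rw [← sub_eq_zero]; rw [← hzero]; abel]
  abel

theorem PhiL_Idl (x : g) {j : Am bb} (hj : j ∈ Idl bb) :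
    PhiL bb nn η hcompl x j ∈ Idl bb := by
  induction hj using Submodule.span_induction generalizing x with
  | mem z hz =>
    obtain ⟨u, w, a, b, rfl⟩ := hz
    -- reduce to u a single, by linearity
    have main : ∀ u : Am bb, ∀ x : g,
        PhiL bb nn η hcompl x (LinearMap.mulRight ℂ (rel bb a b * w) u) ∈ Idl bb := by
      intro u
      induction u using MonoidAlgebra.induction_linear with
      | zero =>
        intro x
        rw [map_zero, map_zero]
        exact (Idl bb).zero_mem
      | add p q hp hq =>
        intro x
        rw [map_add, map_add]
        exact (Idl bb).add_mem (hp x) (hq x)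
      | single m c =>
        show ∀ x : g, PhiL bb nn η hcompl x
          (MonoidAlgebra.single m c * (rel bb a b * w)) ∈ Idl bb
        rw [← FreeMonoid.ofList_toList m]
        generalize FreeMonoid.toList m = l
        induction l generalizing c with
        | nil =>
          intro x
          show PhiL bb nn η hcompl x
            (MonoidAlgebra.single (FreeMonoid.ofList []) c * (rel bb a b * w)) ∈ Idl bb
          have h1 : MonoidAlgebra.single
              (FreeMonoid.ofList ([] : List (Module.Basis.ofVectorSpaceIndex ℂ bb))) c *
              (rel bb a b * w) = c • (rel bb a b * w) := single_one_mul bb c _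
          rw [h1, map_smul, PhiL_rel]
          exact (Idl bb).smul_mem c (rel_mem_Idl bb a b _)
        | cons i l ih =>
          intro x
          show PhiL bb nn η hcompl x
            (MonoidAlgebra.single (FreeMonoid.ofList (i :: l)) c * (rel bb a b * w)) ∈ Idl bb
          have hs2 : MonoidAlgebra.single (FreeMonoid.ofList (i :: l)) c =
              MonoidAlgebra.single (FreeMonoid.of i) (1 : ℂ) *
                MonoidAlgebra.single (FreeMonoid.ofList l) c := by
            rw [MonoidAlgebra.single_mul_single, one_mul, FreeMonoid.ofList_cons]
          have hsplit : MonoidAlgebra.single (FreeMonoid.ofList (i :: l)) c *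
              (rel bb a b * w) =
              MonoidAlgebra.single (FreeMonoid.of i) (1 : ℂ) *
                (MonoidAlgebra.single (FreeMonoid.ofList l) c * (rel bb a b * w)) := by
            rw [hs2, mul_assoc]
          rw [hsplit, PhiL_mul_single]
          exact (Idl bb).add_mem (Idl_mul_left bb _ (ih c x)) (ih c ⁅x, (BB bb i : g)⁆)
    have := main u x
    rw [LinearMap.mulRight_apply] at this
    rwa [← mul_assoc] at this
  | zero =>
    rw [map_zero]
    exact (Idl bb).zero_mem
  | add p q _ _ hp hq =>
    rw [map_add]
    exact (Idl bb).add_mem (hp x) (hq x)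
  | smul c p _ hp =>
    rw [map_smul]
    exact (Idl bb).smul_mem c (hp x)


/-- the induced module -/
abbrev Vq (bb : LieSubalgebra ℂ g) : Type _ := Am bb ⧸ Idl bb

theorem Idl_le_comap (x : g) : Idl bb ≤ (Idl bb).comap (PhiL bb nn η hcompl x) :=
  fun _ hj => PhiL_Idl bb nn η hcompl x hj

/-- the action of g on the induced module -/
noncomputable def rho0 (x : g) : Module.End ℂ (Vq bb) :=
  Submodule.mapQ (Idl bb) (Idl bb) (PhiL bb nn η hcompl x) (Idl_le_comap bb nn η hcompl x)

theorem rho0_mk (x : g) (t : Am bb) :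
    rho0 bb nn η hcompl x (Submodule.Quotient.mk t) =
      Submodule.Quotient.mk (PhiL bb nn η hcompl x t) := rfl

/-- the action as a Lie algebra homomorphism -/
noncomputable def rho : g →ₗ⁅ℂ⁆ Module.End ℂ (Vq bb) where
  toFun := rho0 bb nn η hcompl
  map_add' x y := by
    apply Submodule.linearMap_qext
    refine LinearMap.ext fun t => ?_
    simp only [LinearMap.comp_apply, Submodule.mkQ_apply, LinearMap.add_apply, rho0_mk, map_add]
    rw [Submodule.Quotient.mk_add]
  map_smul' c x := by
    apply Submodule.linearMap_qext
    refine LinearMap.ext fun t => ?_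
    simp only [LinearMap.comp_apply, Submodule.mkQ_apply, RingHom.id_apply,
      LinearMap.smul_apply, rho0_mk, map_smul]
    rw [Submodule.Quotient.mk_smul]
  map_lie' {x y} := by
    apply Submodule.linearMap_qext
    refine LinearMap.ext fun t => ?_
    simp only [LinearMap.comp_apply, Submodule.mkQ_apply, rho0_mk]
    rw [Ring.lie_def, LinearMap.sub_apply, Module.End.mul_apply, Module.End.mul_apply,
      rho0_mk, rho0_mk, rho0_mk, rho0_mk, ← Submodule.Quotient.mk_sub]
    rw [Submodule.Quotient.eq]
    have := Dop_mem bb nn η hcompl x y t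
    rw [Dop_apply] at this
    have heq : PhiL bb nn η hcompl ⁅x, y⁆ t -
        (PhiL bb nn η hcompl x (PhiL bb nn η hcompl y t) -
          PhiL bb nn η hcompl y (PhiL bb nn η hcompl x t)) =
        PhiL bb nn η hcompl ⁅x, y⁆ t - PhiL bb nn η hcompl x (PhiL bb nn η hcompl y t) +
          PhiL bb nn η hcompl y (PhiL bb nn η hcompl x t) := by abel
    rw [heq]
    exact this

/-- lift of rho to U -/
noncomputable def rhoHat : U →ₐ[ℂ] Module.End ℂ (Vq bb) :=
  UniversalEnvelopingAlgebra.lift ℂ (rho bb nn η hcompl)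

theorem rhoHat_iota (x : g) :
    rhoHat bb nn η hcompl ((ι : g →ₗ⁅ℂ⁆ U) x) = rho0 bb nn η hcompl x :=
  UniversalEnvelopingAlgebra.lift_ι_apply ℂ _ x

/-- the algebra map back from Am to U -/
noncomputable def psi0 : Am bb →ₐ[ℂ] U :=
  MonoidAlgebra.lift ℂ U (FreeMonoid (Module.Basis.ofVectorSpaceIndex ℂ bb))
    (FreeMonoid.lift fun i => (ι : g →ₗ⁅ℂ⁆ U) ((BB bb i : g)))

theorem psi0_emb (b : bb) : psi0 bb (emb bb b) = (ι : g →ₗ⁅ℂ⁆ U) (b : g) := by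
  have : (psi0 bb).toLinearMap ∘ₗ emb bb =
      ((ι : g →ₗ⁅ℂ⁆ U) : g →ₗ[ℂ] U) ∘ₗ (bb : Submodule ℂ g).subtype := by
    apply Module.Basis.ext (BB bb)
    intro i
    simp only [LinearMap.comp_apply, AlgHom.toLinearMap_apply, Submodule.coe_subtype]
    rw [emb_basis]
    rw [psi0]
    rw [MonoidAlgebra.lift_single]
    rw [FreeMonoid.lift_eval_of, one_smul]
    rfl
  exact DFunLike.congr_fun this b

theorem psi0_rel (a b : bb) : psi0 bb (rel bb a b) = 0 := by
  rw [rel, map_sub, map_add, map_mul, map_mul, psi0_emb, psi0_emb, psi0_emb]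
  have : ((ι : g →ₗ⁅ℂ⁆ U)) ((⁅a, b⁆ : bb) : g) =
      ⁅((ι : g →ₗ⁅ℂ⁆ U)) (a : g), ((ι : g →ₗ⁅ℂ⁆ U)) (b : g)⁆ := by
    rw [LieSubalgebra.coe_bracket, LieHom.map_lie]
  rw [this, Ring.lie_def]
  abel

theorem psi0_Idl {j : Am bb} (hj : j ∈ Idl bb) : psi0 bb j = 0 := by
  induction hj using Submodule.span_induction with
  | mem z hz =>
    obtain ⟨u, w, a, b, rfl⟩ := hz
    rw [map_mul, map_mul, psi0_rel, mul_zero, zero_mul]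
  | zero => rw [map_zero]
  | add p q _ _ hp hq => rw [map_add, hp, hq, add_zero]
  | smul c p _ hp => rw [map_smul, hp, smul_zero]

/-- the linear map back from the induced module to U -/
noncomputable def psiV : Vq bb →ₗ[ℂ] U :=
  (Idl bb).liftQ (psi0 bb).toLinearMap (fun j hj => by
    simp only [LinearMap.mem_ker, AlgHom.toLinearMap_apply]
    exact psi0_Idl bb hj)

theorem psiV_mk (t : Am bb) : psiV bb (Submodule.Quotient.mk t) = psi0 bb t := rfl

theorem psiV_rho_b (b : bb) (v : Vq bb) :
    psiV bb (rho0 bb nn η hcompl (b : g) v) = (ι : g →ₗ⁅ℂ⁆ U) (b : g) * psiV bb v := by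
  obtain ⟨t, rfl⟩ := Submodule.Quotient.mk_surjective _ v
  rw [rho0_mk, psiV_mk, psiV_mk]
  have hsub : psi0 bb (PhiL bb nn η hcompl (b : g) t - emb bb b * t) = 0 :=
    psi0_Idl bb (phib bb nn η hcompl b t)
  rw [map_sub, sub_eq_zero] at hsub
  rw [hsub, map_mul, psi0_emb]

theorem main_proj {a : U} (ha : a ∈ Ub bb) (v : Vq bb) :
    psiV bb (rhoHat bb nn η hcompl a v) = a * psiV bb v := by
  induction ha using Algebra.adjoin_induction generalizing v with
  | mem z hz =>
    obtain ⟨xg, hxg, rfl⟩ := hz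
    rw [rhoHat_iota]
    exact psiV_rho_b bb nn η hcompl ⟨xg, hxg⟩ v
  | algebraMap c =>
    rw [AlgHom.commutes, Module.algebraMap_end_apply, map_smul, Algebra.smul_def]
  | add p q _ _ hp hq =>
    rw [map_add, LinearMap.add_apply, map_add, add_mul]
    rw [hp v, hq v]
  | mul p q _ _ hp hq =>
    rw [map_mul, Module.End.mul_apply, hp, hq, mul_assoc]


theorem pi_J {j : U} (hj : j ∈ Jid nn η) :
    rhoHat bb nn η hcompl j (Submodule.Quotient.mk (1 : Am bb)) = 0 := by
  induction hj using Submodule.span_induction with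
  | mem z hz =>
    obtain ⟨u, x, rfl⟩ := hz
    rw [map_mul, Module.End.mul_apply]
    have hinner : rhoHat bb nn η hcompl ((ι : g →ₗ⁅ℂ⁆ U) (x : g) - algebraMap ℂ U (η x))
        (Submodule.Quotient.mk (1 : Am bb)) = 0 := by
      rw [map_sub, LinearMap.sub_apply, rhoHat_iota, AlgHom.commutes,
        Module.algebraMap_end_apply, rho0_mk, PhiL_one, lin1_coe_n,
        Algebra.algebraMap_eq_smul_one, ← Submodule.Quotient.mk_smul, sub_self]
    rw [hinner, map_zero]
  | zero => rw [map_zero, LinearMap.zero_apply]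
  | add p q _ _ hp hq => rw [map_add, LinearMap.add_apply, hp, hq, add_zero]
  | smul c p _ hp => rw [map_smul, LinearMap.smul_apply, hp, smul_zero]

theorem disj (hcompl : IsCompl (bb : Submodule ℂ g) (nn : Submodule ℂ g)) : Disjoint (Ub bb).toSubmodule (Jid nn η) := by
  rw [disjoint_iff, eq_bot_iff]
  rintro a ⟨haU, haJ⟩
  have h1 : psiV bb (rhoHat bb nn η hcompl a (Submodule.Quotient.mk (1 : Am bb))) =
      a * psiV bb (Submodule.Quotient.mk (1 : Am bb)) := main_proj bb nn η hcompl haU _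
  rw [pi_J bb nn η hcompl haJ, map_zero] at h1
  rw [psiV_mk, map_one, mul_one] at h1
  simpa using h1.symm

end Stmt6


/-- for a Lie algebra `𝔤 = 𝔟̄ ⊕ 𝔫` and a character `η : 𝔫 → ℂ`, one has
`U(𝔤) = U(𝔟̄) ⊕ U(𝔤)U_η(𝔫)`, and the projection `ρ_η` restricted to the center is an
algebra homomorphism: `(uv)^η = u^η v^η` for central `u, v`. Here `U(𝔟̄)` is realised as
the subalgebra of `U(𝔤)` generated by `𝔟̄`, and `U(𝔤)U_η(𝔫)` as the left ideal generated
by the elements `ι(x) - η(x)·1`, `x ∈ 𝔫`. -/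
theorem stmt6 (g : Type*) [LieRing g] [LieAlgebra ℂ g]
    (bb nn : LieSubalgebra ℂ g)
    (hcompl : IsCompl (bb : Submodule ℂ g) (nn : Submodule ℂ g))
    (η : nn →ₗ⁅ℂ⁆ ℂ) :
    let U := UniversalEnvelopingAlgebra ℂ g
    let ι : g →ₗ⁅ℂ⁆ U := UniversalEnvelopingAlgebra.ι ℂ
    let Ub : Subalgebra ℂ U := Algebra.adjoin ℂ (ι '' (bb : Set g))
    let J : Submodule ℂ U := Submodule.span ℂ
      {w : U | ∃ u : U, ∃ x : nn, w = u * (ι (x : g) - algebraMap ℂ U (η x))}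
    IsCompl Ub.toSubmodule J ∧
    (∀ u v ub vb : U, u ∈ Subalgebra.center ℂ U → v ∈ Subalgebra.center ℂ U →
      ub ∈ Ub → vb ∈ Ub → u - ub ∈ J → v - vb ∈ J →
      u * v - ub * vb ∈ J ∧ ub * vb ∈ Ub) := by
  intro U ι Ub J
  constructor
  · exact ⟨Stmt6.disj bb nn η hcompl, Stmt6.codisj bb nn η hcompl⟩
  · intro u v ub vb hu hv hub hvb huJ hvJ
    refine ⟨?_, mul_mem hub hvb⟩
    have hv' := Subalgebra.mem_center_iff.mp hv
    have key : u * v - ub * vb = v * (u - ub) + ub * (v - vb) := by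
      rw [mul_sub, mul_sub, ← hv' u, ← hv' ub]
      abel
    rw [key]
    exact Submodule.add_mem J (Stmt6.Jid_mul_left nn η v huJ)
      (Stmt6.Jid_mul_left nn η ub hvJ)
end

section
/- Let 𝔤 = 𝔟̄ ⊕ 𝔫 be a direct sum of Lie subalgebras, η : 𝔫 → ℂ a character, and W_η = U(𝔤) ⊗_{U(𝔫)} ℂ_η the universal Whittaker module with cyclic vector 1_η. Then for any u ∈ U(𝔤) and x ∈ 𝔫, writing u^η for the component of u in U(𝔟̄) under U(𝔤) = U(𝔟̄) ⊕ U(𝔤)U_η(𝔫), one has (x·u^η - η(x)u^η) = [x,u]^η, i.e., the η-reduced adjoint action satisfies x · u^η = [x,u]^η. -/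
attribute [local instance 100] LieRing.ofAssociativeRing

/-- with `𝔤 = 𝔟̄ ⊕ 𝔫`, a character `η : 𝔫 → ℂ`, and the decomposition
`U(𝔤) = U(𝔟̄) ⊕ U(𝔤)U_η(𝔫)` with projection `u ↦ u^η`, the `η`-reduced action satisfies
`x · u^η = [x,u]^η`, i.e. `(ι(x)·u^η - η(x)u^η)` and `ι(x)u - uι(x)` have the same
projection to `U(𝔟̄)` (their difference lies in `U(𝔤)U_η(𝔫)`). -/
theorem stmt7 (g : Type*) [LieRing g] [LieAlgebra ℂ g]
    (bb nn : LieSubalgebra ℂ g)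
    (hcompl : IsCompl (bb : Submodule ℂ g) (nn : Submodule ℂ g))
    (η : nn →ₗ⁅ℂ⁆ ℂ) :
    let U := UniversalEnvelopingAlgebra ℂ g
    let ι : g →ₗ⁅ℂ⁆ U := UniversalEnvelopingAlgebra.ι ℂ
    let Ub : Subalgebra ℂ U := Algebra.adjoin ℂ (ι '' (bb : Set g))
    let J : Submodule ℂ U := Submodule.span ℂ
      {w : U | ∃ u : U, ∃ x : nn, w = u * (ι (x : g) - algebraMap ℂ U (η x))}
    IsCompl Ub.toSubmodule J →
    ∀ x : nn, ∀ u ub : U, ub ∈ Ub → u - ub ∈ J →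
      (ι (x : g) * ub - η x • ub) - (ι (x : g) * u - u * ι (x : g)) ∈ J := by
  intro U ι Ub J _hC x u ub _hub hJ
  -- J is closed under left multiplication
  have hmul : ∀ a : U, ∀ w ∈ J, a * w ∈ J := by
    intro a w hw
    induction hw using Submodule.span_induction with
    | mem w hw =>
      obtain ⟨u', x', rfl⟩ := hw
      exact Submodule.subset_span ⟨a * u', x', (mul_assoc _ _ _).symm⟩
    | zero => simpa using J.zero_mem
    | add w₁ w₂ _ _ h₁ h₂ => rw [mul_add]; exact J.add_mem h₁ h₂
    | smul c w _ h => rw [mul_smul_comm]; exact J.smul_mem c h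
  have hJ' : ub - u ∈ J := by simpa using J.neg_mem hJ
  have h1 : ι (x : g) * (ub - u) ∈ J := hmul _ _ hJ'
  have h2 : η x • (u - ub) ∈ J := J.smul_mem _ hJ
  have h3 : u * (ι (x : g) - algebraMap ℂ U (η x)) ∈ J :=
    Submodule.subset_span ⟨u, x, rfl⟩
  have hcomm : u * algebraMap ℂ U (η x) = η x • u := by
    rw [Algebra.smul_def, Algebra.commutes]
  have key : (ι (x : g) * ub - η x • ub) - (ι (x : g) * u - u * ι (x : g))
      = ι (x : g) * (ub - u) + η x • (u - ub)
        + u * (ι (x : g) - algebraMap ℂ U (η x)) := by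
    rw [mul_sub, smul_sub, mul_sub, hcomm]
    abel
  rw [key]
  exact J.add_mem (J.add_mem h1 h2) h3
end

section
/- Let L be a Lie algebra over a field k, U(L) its enveloping algebra with standard filtration U_k(L), and let x₀ ∈ L act semisimply by ad on L with integer eigenvalues, inducing eigenspace decompositions (U_k(L))_j for ad(-x₀) with eigenvalue j. Set U_{(i)}(L) = Σ_{k+j=i} (U_k(L))_j. Then the U_{(i)}(L) form an algebra filtration: U_{(i)}(L)·U_{(j)}(L) ⊆ U_{(i+j)}(L), and the associated graded algebra gr U(L) = ⊕_i U_{(i)}(L)/U_{(i-1)}(L) is commutative. -/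
/-- The standard (PBW) filtration on `U(L)`: `U_k(L) = (k·1 + L)^k`. -/
noncomputable def stdFiltration (k : Type*) [Field k] (L : Type*) [LieRing L]
    [LieAlgebra k L] (m : ℕ) : Submodule k (UniversalEnvelopingAlgebra k L) :=
  (Submodule.span k ({1} ∪ Set.range (UniversalEnvelopingAlgebra.ι k (L := L)))) ^ m

/-- The operator `ad(-x₀)` on `U(L)`: `u ↦ u·ι(x₀) - ι(x₀)·u`. -/
noncomputable def adNeg (k : Type*) [Field k] (L : Type*) [LieRing L] [LieAlgebra k L]
    (x₀ : L) : Module.End k (UniversalEnvelopingAlgebra k L) :=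
  LinearMap.mulRight k (UniversalEnvelopingAlgebra.ι k x₀) -
    LinearMap.mulLeft k (UniversalEnvelopingAlgebra.ι k x₀)

/-- The `x₀`-filtration: `U_{(i)}(L) = Σ_{m+j=i} (U_m(L))_j`, where `(U_m(L))_j` is the
eigenspace of `ad(-x₀)` in `U_m(L)` with eigenvalue `j`. -/
noncomputable def xFiltration (k : Type*) [Field k] (L : Type*) [LieRing L]
    [LieAlgebra k L] (x₀ : L) (i : ℕ) : Submodule k (UniversalEnvelopingAlgebra k L) :=
  ⨆ (p : ℕ × ℕ) (_ : p.1 + p.2 = i),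
    stdFiltration k L p.1 ⊓ Module.End.eigenspace (adNeg k L x₀) (p.2 : k)

section Aux

variable (k : Type*) [Field k] (L : Type*) [LieRing L] [LieAlgebra k L]

/-- The generating subspace `k·1 + L` of the PBW filtration. -/
noncomputable abbrev genS : Submodule k (UniversalEnvelopingAlgebra k L) :=
  Submodule.span k ({1} ∪ Set.range (UniversalEnvelopingAlgebra.ι k (L := L)))

variable {k L}

lemma comm_genS : ∀ s ∈ genS k L, ∀ t ∈ genS k L, s * t - t * s ∈ genS k L := by
  intro s hs
  induction hs using Submodule.span_induction with
  | mem s hs =>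
    intro t ht
    induction ht using Submodule.span_induction with
    | mem t ht =>
      rcases hs with h1 | ⟨x, rfl⟩
      · simp only [Set.mem_singleton_iff] at h1; subst h1; simp
      rcases ht with h1 | ⟨y, rfl⟩
      · simp only [Set.mem_singleton_iff] at h1; subst h1; simp
      · have h : UniversalEnvelopingAlgebra.ι k x * UniversalEnvelopingAlgebra.ι k y -
            UniversalEnvelopingAlgebra.ι k y * UniversalEnvelopingAlgebra.ι k x =
            UniversalEnvelopingAlgebra.ι k ⁅x, y⁆ := by
          letI := LieRing.ofAssociativeRing (A := UniversalEnvelopingAlgebra k L)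
          rw [LieHom.map_lie]; rfl
        rw [h]
        exact Submodule.subset_span (Or.inr ⟨_, rfl⟩)
    | zero => simpa using Submodule.zero_mem _
    | add a b _ _ ha hb =>
      have h : s * (a + b) - (a + b) * s = (s * a - a * s) + (s * b - b * s) := by noncomm_ring
      rw [h]; exact add_mem ha hb
    | smul c a _ ha =>
      have h : s * (c • a) - (c • a) * s = c • (s * a - a * s) := by
        rw [mul_smul_comm, smul_mul_assoc, smul_sub]
      rw [h]; exact Submodule.smul_mem _ _ ha
  | zero => intro t ht; simpa using Submodule.zero_mem _
  | add a b _ _ ha hb =>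
    intro t ht
    have h : (a + b) * t - t * (a + b) = (a * t - t * a) + (b * t - t * b) := by noncomm_ring
    rw [h]; exact add_mem (ha t ht) (hb t ht)
  | smul c a _ ha =>
    intro t ht
    have h : (c • a) * t - t * (c • a) = c • (a * t - t * a) := by
      rw [mul_smul_comm, smul_mul_assoc, smul_sub]
    rw [h]; exact Submodule.smul_mem _ _ (ha t ht)

lemma comm_genS_pow (n : ℕ) : ∀ s ∈ genS k L, ∀ v ∈ (genS k L) ^ n,
    s * v - v * s ∈ (genS k L) ^ n := by
  induction n with
  | zero =>
    intro s hs v hv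
    rw [pow_zero] at hv ⊢
    obtain ⟨c, rfl⟩ := Submodule.mem_one.1 hv
    rw [Algebra.commutes c s, sub_self]
    exact Submodule.zero_mem _
  | succ n ih =>
    intro s hs v hv
    rw [pow_succ] at hv
    refine Submodule.mul_induction_on hv ?_ ?_
    · intro a ha b hb
      have h : s * (a * b) - (a * b) * s = (s * a - a * s) * b + a * (s * b - b * s) := by
        noncomm_ring
      rw [pow_succ, h]
      exact add_mem (Submodule.mul_mem_mul (ih s hs a ha) hb)
        (Submodule.mul_mem_mul ha (comm_genS s hs b hb))
    · intro x y hx hy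
      have h : s * (x + y) - (x + y) * s = (s * x - x * s) + (s * y - y * s) := by noncomm_ring
      rw [h]; exact add_mem hx hy

lemma comm_genS_pow_pow (n : ℕ) : ∀ m : ℕ, ∀ u ∈ (genS k L) ^ (m + 1), ∀ v ∈ (genS k L) ^ n,
    u * v - v * u ∈ (genS k L) ^ (m + n) := by
  intro m
  induction m with
  | zero =>
    intro u hu v hv
    rw [pow_one] at hu
    rw [zero_add]
    exact comm_genS_pow n u hu v hv
  | succ m ih =>
    intro u hu v hv
    rw [pow_succ] at hu
    refine Submodule.mul_induction_on hu ?_ ?_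
    · intro a ha b hb
      have h : (a * b) * v - v * (a * b) = a * (b * v - v * b) + (a * v - v * a) * b := by
        noncomm_ring
      have h1 : a * (b * v - v * b) ∈ (genS k L) ^ (m + 1 + n) := by
        rw [pow_add]
        exact Submodule.mul_mem_mul ha (comm_genS_pow n b hb v hv)
      have h2 : (a * v - v * a) * b ∈ (genS k L) ^ (m + 1 + n) := by
        have he : m + 1 + n = (m + n) + 1 := by omega
        rw [he, pow_succ]
        exact Submodule.mul_mem_mul (ih a ha v hv) hb
      rw [h]
      exact add_mem h1 h2
    · intro x y hx hy
      have h : (x + y) * v - v * (x + y) = (x * v - v * x) + (y * v - v * y) := by noncomm_ring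
      rw [h]; exact add_mem hx hy

variable {x₀ : L}

lemma adNeg_mul (u v : UniversalEnvelopingAlgebra k L) :
    adNeg k L x₀ (u * v) = adNeg k L x₀ u * v + u * adNeg k L x₀ v := by
  simp only [adNeg, LinearMap.sub_apply, LinearMap.mulRight_apply, LinearMap.mulLeft_apply]
  noncomm_ring

lemma mem_xFiltration {i m p : ℕ} (h : m + p = i) {u : UniversalEnvelopingAlgebra k L}
    (h1 : u ∈ stdFiltration k L m) (h2 : adNeg k L x₀ u = (p : k) • u) :
    u ∈ xFiltration k L x₀ i := by
  apply Submodule.mem_iSup_of_mem (m, p)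
  apply Submodule.mem_iSup_of_mem h
  exact ⟨h1, Module.End.mem_eigenspace_iff.2 h2⟩

lemma xFiltration_induction {i : ℕ} {motive : UniversalEnvelopingAlgebra k L → Prop}
    {x : UniversalEnvelopingAlgebra k L} (hx : x ∈ xFiltration k L x₀ i)
    (mem : ∀ m p : ℕ, m + p = i → ∀ u, u ∈ stdFiltration k L m →
      adNeg k L x₀ u = (p : k) • u → motive u)
    (zero : motive 0)
    (add : ∀ u v, motive u → motive v → motive (u + v)) : motive x := by
  refine Submodule.iSup_induction _ (motive := motive) hx ?_ zero add
  intro q u hu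
  by_cases h : q.1 + q.2 = i
  · rw [iSup_pos h] at hu
    exact mem q.1 q.2 h u hu.1 (Module.End.mem_eigenspace_iff.1 hu.2)
  · rw [iSup_neg h] at hu
    simp only [Submodule.mem_bot] at hu
    subst hu; exact zero

end Aux

/-- if `ad x₀` is diagonalizable on `L` with nonpositive integer eigenvalues,
then the subspaces `U_{(i)}(L)` form an algebra filtration,
`U_{(i)}(L)·U_{(j)}(L) ⊆ U_{(i+j)}(L)`, and the associated graded algebra is commutative:
`uv - vu ∈ U_{(i+j-1)}(L)` for `u ∈ U_{(i)}(L)`, `v ∈ U_{(j)}(L)`. -/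
theorem stmt10 (k : Type*) [Field k] [CharZero k] (L : Type*) [LieRing L] [LieAlgebra k L]
    (x₀ : L)
    (hdiag : Submodule.span k {y : L | ∃ m : ℕ, ⁅x₀, y⁆ = -(m : k) • y} = ⊤) :
    (∀ i j : ℕ, xFiltration k L x₀ i * xFiltration k L x₀ j ≤ xFiltration k L x₀ (i + j)) ∧
    (∀ i j : ℕ, ∀ u v : UniversalEnvelopingAlgebra k L,
      u ∈ xFiltration k L x₀ i → v ∈ xFiltration k L x₀ j →
      u * v - v * u ∈ xFiltration k L x₀ (i + j - 1)) := by
  constructor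
  · intro i j
    rw [Submodule.mul_le]
    intro u hu v hv
    refine xFiltration_induction (motive := fun u => ∀ v ∈ xFiltration k L x₀ j,
      u * v ∈ xFiltration k L x₀ (i + j)) hu ?_ ?_ ?_ v hv
    · intro m p hmp u hu1 hu2 v hv
      refine xFiltration_induction
        (motive := fun v => u * v ∈ xFiltration k L x₀ (i + j)) hv ?_ ?_ ?_
      · intro n q hnq v hv1 hv2
        refine mem_xFiltration (m := m + n) (p := p + q) (by omega) ?_ ?_
        · show u * v ∈ (genS k L) ^ (m + n)
          rw [pow_add]
          exact Submodule.mul_mem_mul hu1 hv1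
        · rw [adNeg_mul, hu2, hv2, Nat.cast_add, add_smul, smul_mul_assoc, mul_smul_comm]
      · simp only [mul_zero]; exact zero_mem _
      · intro a b ha hb; simp only [mul_add]; exact add_mem ha hb
    · intro v hv; simp only [zero_mul]; exact zero_mem _
    · intro a b ha hb v hv; simp only [add_mul]; exact add_mem (ha v hv) (hb v hv)
  · intro i j u v hu hv
    refine xFiltration_induction (motive := fun u => ∀ v ∈ xFiltration k L x₀ j,
      u * v - v * u ∈ xFiltration k L x₀ (i + j - 1)) hu ?_ ?_ ?_ v hv
    · intro m p hmp u hu1 hu2 v hv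
      refine xFiltration_induction
        (motive := fun v => u * v - v * u ∈ xFiltration k L x₀ (i + j - 1)) hv ?_ ?_ ?_
      · intro n q hnq v hv1 hv2
        cases m with
        | zero =>
          have hu1' : u ∈ (1 : Submodule k (UniversalEnvelopingAlgebra k L)) := by
            rw [stdFiltration, pow_zero] at hu1; exact hu1
          obtain ⟨c, rfl⟩ := Submodule.mem_one.1 hu1'
          rw [Algebra.commutes c v, sub_self]
          exact zero_mem _
        | succ m' =>
          refine mem_xFiltration (m := m' + n) (p := p + q) (by omega) ?_ ?_
          · show u * v - v * u ∈ (genS k L) ^ (m' + n)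
            exact comm_genS_pow_pow n m' u hu1 v hv1
          · rw [map_sub, adNeg_mul, adNeg_mul, hu2, hv2]
            simp only [smul_mul_assoc, mul_smul_comm, Nat.cast_add]
            module
      · simp only [mul_zero, zero_mul, sub_self]; exact zero_mem _
      · intro a b ha hb
        have h : u * (a + b) - (a + b) * u = (u * a - a * u) + (u * b - b * u) := by noncomm_ring
        rw [h]; exact add_mem ha hb
    · intro v hv; simp only [zero_mul, mul_zero, sub_self]; exact zero_mem _
    · intro a b ha hb v hv
      have h : (a + b) * v - v * (a + b) = (a * v - v * a) + (b * v - v * b) := by noncomm_ring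
      rw [h]; exact add_mem (ha v hv) (hb v hv)
end
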